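/- Let (T,Σ,μ) be a complete finite measure space and E a separable Banach space with dual E*. If {f_n} is an integrably bounded sequence of Gelfand integrable functions from T to E* such that f_n → f in the σ(G¹,L^∞⊗E)-topology (i.e., for every x ∈ E and every φ ∈ L^∞(μ), ∫ φ(t)⟨x, f_n(t)⟩ dμ → ∫ φ(t)⟨x, f(t)⟩ dμ), then f(t) belongs to the weak*-closed convex hull of w*-Ls{f_n(t)} for a.e. t ∈ T. -/

import Mathlib

open MeasureTheory Filter Topology Set

noncomputable section

/-- The (strong) upper limit `Ls {F n}` of a sequence of sets in a topological space:
all points that are limits of some subsequence of points `x_{n_i} ∈ F_{n_i}`. -/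
def Ls {E : Type*} [TopologicalSpace E] (F : ℕ → Set E) : Set E :=
  {x | ∃ φ : ℕ → ℕ, StrictMono φ ∧ ∃ u : ℕ → E,
    (∀ i, u i ∈ F (φ i)) ∧ Tendsto u atTop (𝓝 x)}

/-- A function with values in the dual of `E` is Gelfand integrable: it is weakly*
scalarly integrable and over each measurable set it has a Gelfand integral. -/
def GelfandIntegrable {T : Type*} [MeasurableSpace T] {E : Type*} [NormedAddCommGroup E]
    [NormedSpace ℝ E] (μ : Measure T) (f : T → (E →L[ℝ] ℝ)) : Prop :=
  (∀ x : E, Integrable (fun t => f t x) μ) ∧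
  ∀ A : Set T, MeasurableSet A → ∃ g : E →L[ℝ] ℝ, ∀ x : E, g x = ∫ t in A, f t x ∂μ

open scoped Classical in
/-- The Gelfand (weak*) integral of a function with values in the dual of `E`. -/
noncomputable def gelfandIntegral {T : Type*} [MeasurableSpace T] {E : Type*}
    [NormedAddCommGroup E] [NormedSpace ℝ E] (μ : Measure T)
    (f : T → (E →L[ℝ] ℝ)) : E →L[ℝ] ℝ :=
  if h : ∃ g : E →L[ℝ] ℝ, ∀ x : E, g x = ∫ t, f t x ∂μ then h.choose else 0

/-- The weak* upper limit `w*-Ls {F n}` of a sequence of sets in the dual of `E`. -/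
def wstarLs {E : Type*} [NormedAddCommGroup E] [NormedSpace ℝ E]
    (F : ℕ → Set (E →L[ℝ] ℝ)) : Set (E →L[ℝ] ℝ) :=
  {g | ∃ φ : ℕ → ℕ, StrictMono φ ∧ ∃ u : ℕ → (E →L[ℝ] ℝ), (∀ i, u i ∈ F (φ i)) ∧
    ∀ x : E, Tendsto (fun i => u i x) atTop (𝓝 (g x))}

/-- The Gelfand integral of a multifunction: the set of Gelfand integrals of its
Gelfand integrable a.e.-selectors. -/
def gelfandSelIntegral {T : Type*} [MeasurableSpace T] {E : Type*} [NormedAddCommGroup E]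
    [NormedSpace ℝ E] (μ : Measure T) (G : T → Set (E →L[ℝ] ℝ)) : Set (E →L[ℝ] ℝ) :=
  {y | ∃ g : T → (E →L[ℝ] ℝ), GelfandIntegrable μ g ∧ (∀ᵐ t ∂μ, g t ∈ G t) ∧
    y = gelfandIntegral μ g}

/-- The weak*-closure of a set in the dual of `E`. -/
def wstarClosure {E : Type*} [NormedAddCommGroup E] [NormedSpace ℝ E]
    (s : Set (E →L[ℝ] ℝ)) : Set (E →L[ℝ] ℝ) :=
  @closure (WeakDual ℝ E) _ s

/-! For `x` in a countable dense subset of `E`, testing the weak convergence against indicators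
gives `⟨x, g t⟩ ≤ limsup ⟨x, f n t⟩` for a.e. `t`: on a non-null set where
`⟨x, f n t⟩ ≤ ⟨x, g t⟩ - ε` for all large `n`, the integrals could not converge to the right
limit. The pointwise bound `‖f n t‖ ≤ φ t` extends this to every `x`.
If `g t` lay outside the weak*-closed convex hull, Hahn–Banach in the weak* topology would give
`x` and `a` with `⟨x, y⟩ < a < ⟨x, g t⟩` on the hull. But `a < ⟨x, f n t⟩` for infinitely many `n`,
and by sequential Banach–Alaoglu a subsequence of those `f n t` converges weak* to a point of
`w*-Ls {f n t}` at which `⟨x, ·⟩ ≥ a`. -/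

section ScalarLimit

variable {T : Type*} [MeasurableSpace T] {μ : Measure T} {u : ℕ → T → ℝ} {v : T → ℝ}

lemma tendsto_setIntegral_of_tendsto_integral_mul
    (h : ∀ ψ : T → ℝ, Measurable ψ → (∃ C, ∀ t, |ψ t| ≤ C) →
      Tendsto (fun n => ∫ t, ψ t * u n t ∂μ) atTop (𝓝 (∫ t, ψ t * v t ∂μ)))
    {A : Set T} (hA : MeasurableSet A) :
    Tendsto (fun n => ∫ t in A, u n t ∂μ) atTop (𝓝 (∫ t in A, v t ∂μ)) := by
  have hind (w : T → ℝ) : ∫ t, A.indicator 1 t * w t ∂μ = ∫ t in A, w t ∂μ := by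
    simp_rw [← indicator_mul_left, Pi.one_apply, one_mul, integral_indicator hA]
  simpa only [hind] using h (A.indicator 1) (measurable_one.indicator hA)
    ⟨1, fun t => by by_cases ht : t ∈ A <;> simp [ht]⟩

variable [IsFiniteMeasure μ]

lemma measure_forall_ge_le_sub_eq_zero (hu : ∀ n, Integrable (u n) μ) (hv : Integrable v μ)
    (hlim : ∀ A, MeasurableSet A →
      Tendsto (fun n => ∫ t in A, u n t ∂μ) atTop (𝓝 (∫ t in A, v t ∂μ)))
    {ε : ℝ} (hε : 0 < ε) (m : ℕ) :
    μ {t | ∀ n, m ≤ n → u n t ≤ v t - ε} = 0 := by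
  set B := {t | ∀ n, m ≤ n → u n t ≤ v t - ε}
  have hB : NullMeasurableSet B μ := by
    simp only [B, ofPred_forall]
    exact .iInter fun n => .iInter fun _ =>
      nullMeasurableSet_le (hu n).aemeasurable (hv.aemeasurable.sub_const ε)
  -- `B` need not be measurable, but its measurable hull carries the same restricted measure
  have hrestrict : μ.restrict (toMeasurable μ B) = μ.restrict B :=
    Measure.restrict_toMeasurable (measure_ne_top μ B)
  have hlimB : Tendsto (fun n => ∫ t in B, u n t ∂μ) atTop (𝓝 (∫ t in B, v t ∂μ)) := by
    simpa only [hrestrict] using hlim _ (measurableSet_toMeasurable μ B)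
  have hle : ∀ n, m ≤ n → ∫ t in B, u n t ∂μ ≤ ∫ t in B, v t ∂μ - ε * μ.real B := by
    intro n hn
    calc ∫ t in B, u n t ∂μ ≤ ∫ t in B, (v t - ε) ∂μ :=
          setIntegral_mono_ae_restrict (hu n).integrableOn
            (hv.sub (integrable_const ε)).integrableOn
            ((ae_restrict_mem₀ hB).mono fun t ht => ht n hn)
      _ = ∫ t in B, v t ∂μ - ε * μ.real B := by
          rw [integral_sub hv.integrableOn (integrable_const ε), setIntegral_const, smul_eq_mul,
            mul_comm]
  have hmeasure : ε * μ.real B ≤ 0 := by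
    linarith [le_of_tendsto hlimB (eventually_atTop.2 ⟨m, hle⟩)]
  exact (measureReal_eq_zero_iff).1
    (le_antisymm (nonpos_of_mul_nonpos_right hmeasure hε) measureReal_nonneg)

lemma ae_frequently_sub_lt (hu : ∀ n, Integrable (u n) μ) (hv : Integrable v μ)
    (hlim : ∀ A, MeasurableSet A →
      Tendsto (fun n => ∫ t in A, u n t ∂μ) atTop (𝓝 (∫ t in A, v t ∂μ)))
    {ε : ℝ} (hε : 0 < ε) :
    ∀ᵐ t ∂μ, ∃ᶠ n in atTop, v t - ε < u n t := by
  refine ae_iff.2 (measure_mono_null (fun t ht => ?_)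
    (measure_iUnion_null (measure_forall_ge_le_sub_eq_zero hu hv hlim hε)))
  simpa only [mem_ofPred_eq, not_frequently, not_lt, eventually_atTop, mem_iUnion] using ht

lemma ae_frequently_lt_of_tendsto_setIntegral (hu : ∀ n, Integrable (u n) μ)
    (hv : Integrable v μ)
    (hlim : ∀ A, MeasurableSet A →
      Tendsto (fun n => ∫ t in A, u n t ∂μ) atTop (𝓝 (∫ t in A, v t ∂μ))) :
    ∀ᵐ t ∂μ, ∀ a < v t, ∃ᶠ n in atTop, a < u n t := by
  have hall := ae_all_iff.2 fun j : ℕ =>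
    ae_frequently_sub_lt hu hv hlim (Nat.one_div_pos_of_nat (n := j))
  filter_upwards [hall] with t ht a ha
  obtain ⟨j, hj⟩ := exists_nat_one_div_lt (sub_pos.2 ha)
  exact (ht j).mono fun n hn => by linarith

end ScalarLimit

section WeakStar

variable {E : Type*} [NormedAddCommGroup E] [NormedSpace ℝ E]

lemma frequently_lt_of_denseRange {ι : Type*} {D : ι → E} (hD : DenseRange D)
    {v : ℕ → E →L[ℝ] ℝ} {c : ℝ} (hv : ∀ n, ‖v n‖ ≤ c) {L : E →L[ℝ] ℝ}
    (h : ∀ k, ∀ a < L (D k), ∃ᶠ n in atTop, a < v n (D k)) (x : E) :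
    ∀ a < L x, ∃ᶠ n in atTop, a < v n x := by
  intro a ha
  have hc : 0 ≤ c := (norm_nonneg _).trans (hv 0)
  obtain ⟨k, hk⟩ := hD.exists_dist_lt x
    (div_pos (sub_pos.2 ha) (by positivity : (0 : ℝ) < c + ‖L‖ + 1))
  set r := dist x (D k)
  have hr : (c + ‖L‖) * r < L x - a := by
    rw [lt_div_iff₀ (by positivity)] at hk
    nlinarith [dist_nonneg (x := x) (y := D k)]
  have hL : L x - ‖L‖ * r ≤ L (D k) := by
    linarith [abs_le.1 (L.dist_le_opNorm x (D k)), Real.dist_eq (L x) (L (D k))]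
  refine (h k (a + c * r) (by linarith)).mono fun n hn => ?_
  have hvn : v n (D k) - v n x ≤ c * r := by
    calc v n (D k) - v n x ≤ dist (v n x) (v n (D k)) := by
          rw [Real.dist_eq, abs_sub_comm]; exact le_abs_self _
      _ ≤ ‖v n‖ * r := (v n).dist_le_opNorm x (D k)
      _ ≤ c * r := mul_le_mul_of_nonneg_right (hv n) dist_nonneg
  linarith

lemma WeakDual.exists_separating_eval {s : Set (WeakDual ℝ E)} (hs : Convex ℝ s)
    (hsc : IsClosed s) {L : WeakDual ℝ E} (hL : L ∉ s) :
    ∃ x : E, ∃ a : ℝ, (∀ b ∈ s, b x < a) ∧ a < L x := by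
  have : LocallyConvexSpace ℝ (WeakDual ℝ E) := WeakBilin.locallyConvexSpace
  obtain ⟨F, a, hFs, hFL⟩ := geometric_hahn_banach_closed_point hs hsc hL
  obtain ⟨x, rfl⟩ := LinearMap.dualEmbedding_surjective (topDualPairing ℝ E) F
  exact ⟨x, a, hFs, hFL⟩

lemma exists_mem_wstarLs_le_of_frequently [TopologicalSpace.SeparableSpace E]
    {v : ℕ → E →L[ℝ] ℝ} {c : ℝ} (hv : ∀ n, ‖v n‖ ≤ c) {x : E} {a : ℝ}
    (h : ∃ᶠ n in atTop, a < v n x) :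
    ∃ L ∈ wstarLs (fun n => {v n}), a ≤ L x := by
  obtain ⟨φ, hφ, hφa⟩ := extraction_of_frequently_atTop h
  obtain ⟨L, -, ψ, hψ, hlim⟩ := WeakDual.isSeqCompact_closedBall ℝ E 0 c
    (x := fun i => StrongDual.toWeakDual (v (φ i)))
    fun i => mem_closedBall_zero_iff.2 (hv (φ i))
  have hpt (y : E) : Tendsto (fun i => v (φ (ψ i)) y) atTop (𝓝 (L y)) :=
    ((WeakDual.eval_continuous y).tendsto L).comp hlim
  exact ⟨L, ⟨φ ∘ ψ, hφ.comp hψ, fun i => v (φ (ψ i)), fun i => rfl, hpt⟩,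
    ge_of_tendsto' (hpt x) fun i => (hφa (ψ i)).le⟩

lemma mem_wstarClosure_convexHull_wstarLs [TopologicalSpace.SeparableSpace E]
    {v : ℕ → E →L[ℝ] ℝ} {c : ℝ} (hv : ∀ n, ‖v n‖ ≤ c) {L : E →L[ℝ] ℝ}
    (h : ∀ x, ∀ a < L x, ∃ᶠ n in atTop, a < v n x) :
    L ∈ wstarClosure (convexHull ℝ (wstarLs (fun n => {v n}))) := by
  by_contra hL
  obtain ⟨x, a, hsep, haL⟩ := WeakDual.exists_separating_eval
    ((convex_convexHull ℝ _).closure) isClosed_closure hL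
  obtain ⟨L', hL', haL'⟩ := exists_mem_wstarLs_le_of_frequently hv (h x a haL)
  exact (hsep L' (subset_closure (subset_convexHull ℝ _ hL'))).not_ge haL'

end WeakStar

theorem gelfand_limit_mem_wstar_closedConvexHull_general {T : Type*} [MeasurableSpace T]
    {E : Type*} [NormedAddCommGroup E] [NormedSpace ℝ E]
    [TopologicalSpace.SeparableSpace E]
    (μ : Measure T) [IsFiniteMeasure μ]
    (f : ℕ → T → (E →L[ℝ] ℝ)) (hgi : ∀ n, GelfandIntegrable μ (f n))
    (hib : ∃ φ : T → ℝ, Integrable φ μ ∧ ∀ᵐ t ∂μ, ∀ n, ‖f n t‖ ≤ φ t)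
    (g : T → (E →L[ℝ] ℝ)) (hg : GelfandIntegrable μ g)
    (hconv : ∀ x : E, ∀ ψ : T → ℝ, Measurable ψ → (∃ C, ∀ t, |ψ t| ≤ C) →
      Tendsto (fun n => ∫ t, ψ t * f n t x ∂μ) atTop
        (𝓝 (∫ t, ψ t * g t x ∂μ))) :
    ∀ᵐ t ∂μ, g t ∈ wstarClosure (convexHull ℝ (wstarLs (fun n => {f n t}))) := by
  obtain ⟨φ, -, hφ⟩ := hib
  let D := TopologicalSpace.denseSeq E
  have hD : ∀ k, ∀ᵐ t ∂μ, ∀ a < g t (D k), ∃ᶠ n in atTop, a < f n t (D k) := fun k =>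
    ae_frequently_lt_of_tendsto_setIntegral (fun n => (hgi n).1 (D k)) (hg.1 (D k))
      fun _ hA => tendsto_setIntegral_of_tendsto_integral_mul (hconv (D k)) hA
  filter_upwards [ae_all_iff.2 hD, hφ] with t hDt hφt
  exact mem_wstarClosure_convexHull_wstarLs hφt
    (frequently_lt_of_denseRange (TopologicalSpace.denseRange_denseSeq E) hφt hDt)

/-- **Castaing–Marcellin lemma for Gelfand integrals.** If an integrably bounded
sequence of Gelfand integrable functions converges to `g` in the
`σ(G¹, L^∞ ⊗ E)`-topology, then a.e. `g t` lies in the weak*-closed convex hull of the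
weak* upper limit `w*-Ls {f n t}`. -/
theorem gelfand_limit_mem_wstar_closedConvexHull {T : Type*} [MeasurableSpace T]
    {E : Type*} [NormedAddCommGroup E] [NormedSpace ℝ E] [CompleteSpace E]
    [TopologicalSpace.SeparableSpace E]
    (μ : Measure T) [IsFiniteMeasure μ] (hcomp : μ.IsComplete)
    (f : ℕ → T → (E →L[ℝ] ℝ)) (hgi : ∀ n, GelfandIntegrable μ (f n))
    (hib : ∃ φ : T → ℝ, Integrable φ μ ∧ ∀ᵐ t ∂μ, ∀ n, ‖f n t‖ ≤ φ t)
    (g : T → (E →L[ℝ] ℝ)) (hg : GelfandIntegrable μ g)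
    (hconv : ∀ x : E, ∀ ψ : T → ℝ, Measurable ψ → (∃ C, ∀ t, |ψ t| ≤ C) →
      Tendsto (fun n => ∫ t, ψ t * f n t x ∂μ) atTop
        (𝓝 (∫ t, ψ t * g t x ∂μ))) :
    ∀ᵐ t ∂μ, g t ∈ wstarClosure (convexHull ℝ (wstarLs (fun n => {f n t}))) :=
  gelfand_limit_mem_wstar_closedConvexHull_general μ f hgi hib g hg hconv

end
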